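/- Let F : ℝ^d → ℝ be C² and (0,n)-convex, i.e. F''(x) ≥ (1/n) F'(x) ⊗ F'(x) as quadratic forms for all x, with n > 0. Let X : [0,T] → ℝ^d solve Ẍ = F''(X)F'(X), let E = |Ẋ(t)|² − |F'(X(t))|² be the conserved energy, and set Φ(t) = ∫₀ᵗ |Ẋ(s) + F'(X(s))|² ds − tE. Then Φ''(t) ≥ Φ'(t)²/(2n) on (0,T). -/

import Mathlib

/-!
Along a solution of `Ẍ = F''(X) F'(X)` the vector `Y = Ẋ + F'(X)` solves the linear equation
`Ẏ = F''(X) Y`, because `F''` is symmetric. Conservation of energy turns `Φ' = |Y|² - E` into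
`2⟨F'(X), Y⟩`, while `Φ'' = 2⟨F''(X) Y, Y⟩`; the `(0,n)`-convexity of `F` bounds the latter below by
`(2/n)⟨F'(X), Y⟩² = Φ'²/(2n)`.
-/

open Real Set InnerProductSpace
open scoped RealInnerProductSpace

section Gradient

variable {E : Type*} [NormedAddCommGroup E] [InnerProductSpace ℝ E] [CompleteSpace E]
  {f : E → ℝ} {x : E}

/-- Over `ℝ` the inverse Riesz map `(toDual ℝ E).symm`, which is only conjugate-linear in general,
is a continuous linear map. -/
noncomputable def toDualSymmCLM : StrongDual ℝ E →L[ℝ] E :=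
  LinearMap.mkContinuous
    { toFun := fun φ => (toDual ℝ E).symm φ
      map_add' := fun φ ψ => by simp
      map_smul' := fun c φ => by simp }
    1 (fun φ => by simp)

theorem gradient_eq_toDualSymmCLM_comp (f : E → ℝ) :
    gradient f = toDualSymmCLM ∘ fderiv ℝ f := rfl

theorem ContDiffAt.gradient {m n : WithTop ℕ∞} (hf : ContDiffAt ℝ n f x) (hmn : m + 1 ≤ n) :
    ContDiffAt ℝ m (gradient f) x :=
  toDualSymmCLM.contDiff.contDiffAt.comp x (hf.fderiv_right hmn)

theorem ContDiff.gradient {m n : WithTop ℕ∞} (hf : ContDiff ℝ n f) (hmn : m + 1 ≤ n) :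
    ContDiff ℝ m (gradient f) :=
  toDualSymmCLM.contDiff.comp (hf.fderiv_right hmn)

theorem inner_fderiv_gradient (hf : DifferentiableAt ℝ (fderiv ℝ f) x) (v w : E) :
    ⟪fderiv ℝ (gradient f) x v, w⟫ = fderiv ℝ (fderiv ℝ f) x v w := by
  rw [gradient_eq_toDualSymmCLM_comp, ((toDualSymmCLM.hasFDerivAt).comp x hf.hasFDerivAt).fderiv]
  exact toDual_symm_apply

theorem inner_fderiv_gradient_comm (hf : ContDiffAt ℝ 2 f x) (v w : E) :
    ⟪fderiv ℝ (gradient f) x v, w⟫ = ⟪fderiv ℝ (gradient f) x w, v⟫ := by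
  have hf' : DifferentiableAt ℝ (fderiv ℝ f) x :=
    (hf.fderiv_right (m := 1) le_rfl).differentiableAt one_ne_zero
  rw [inner_fderiv_gradient hf', inner_fderiv_gradient hf']
  exact hf.isSymmSndFDerivAt (by simp) v w

theorem gradient_norm_sq_gradient (hf : ContDiffAt ℝ 2 f x) :
    gradient (fun z => ‖gradient f z‖ ^ 2) x
      = (2 : ℝ) • fderiv ℝ (gradient f) x (gradient f x) := by
  have hg : DifferentiableAt ℝ (gradient f) x :=
    (hf.gradient (m := 1) le_rfl).differentiableAt one_ne_zero
  refine ext_inner_right ℝ fun v => ?_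
  rw [inner_gradient_left, hg.hasFDerivAt.norm_sq.fderiv, real_inner_smul_left,
    inner_fderiv_gradient_comm hf]
  simp

theorem hasDerivAt_deriv_add_gradient_comp {X : ℝ → E} {t : ℝ}
    (hX : DifferentiableAt ℝ X t) (hX' : DifferentiableAt ℝ (deriv X) t)
    (hf : DifferentiableAt ℝ (gradient f) (X t))
    (hNewton : deriv (deriv X) t = fderiv ℝ (gradient f) (X t) (gradient f (X t))) :
    HasDerivAt (fun u => deriv X u + gradient f (X u))
      (fderiv ℝ (gradient f) (X t) (deriv X t + gradient f (X t))) t := by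
  convert hX'.hasDerivAt.add (hf.hasFDerivAt.comp_hasDerivAt t hX.hasDerivAt) using 1
  · rfl
  · rw [hNewton, map_add, add_comm]

end Gradient

theorem deriv_integral_sub_mul_const {g : ℝ → ℝ} (hg : Continuous g) (c : ℝ) :
    deriv (fun u => (∫ s in (0:ℝ)..u, g s) - u * c) = fun u => g u - c :=
  funext fun u =>
    ((hg.integral_hasStrictDerivAt 0 u).hasDerivAt.sub (hasDerivAt_mul_const c)).deriv

theorem stmt_12_general (d : ℕ) (T n : ℝ) (hn : 0 < n)
    (F : EuclideanSpace ℝ (Fin d) → ℝ) (hF : ContDiff ℝ 2 F)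
    (hconv : ∀ x v : EuclideanSpace ℝ (Fin d),
      (1 / n) * ⟪gradient F x, v⟫ ^ 2 ≤ ⟪fderiv ℝ (gradient F) x v, v⟫)
    (X : ℝ → EuclideanSpace ℝ (Fin d)) (hX : ContDiff ℝ 2 X)
    (hNewton : ∀ t ∈ Icc (0:ℝ) T,
      deriv (deriv X) t = (1/2 : ℝ) • gradient (fun z => ‖gradient F z‖ ^ 2) (X t))
    (E : ℝ)
    (hE : ∀ t ∈ Icc (0:ℝ) T, ‖deriv X t‖ ^ 2 - ‖gradient F (X t)‖ ^ 2 = E) :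
    ∀ t ∈ Ioo (0:ℝ) T,
      (deriv (fun u => (∫ s in (0:ℝ)..u, ‖deriv X s + gradient F (X s)‖ ^ 2) - u * E) t) ^ 2
          / (2 * n)
        ≤ deriv (deriv
            (fun u => (∫ s in (0:ℝ)..u, ‖deriv X s + gradient F (X s)‖ ^ 2) - u * E)) t := by
  intro t ht
  have htIcc : t ∈ Icc (0:ℝ) T := Ioo_subset_Icc_self ht
  have hG : ContDiff ℝ 1 (gradient F) := hF.gradient le_rfl
  have hDX : ContDiff ℝ 1 (deriv X) := hX.deriv'
  set Y : ℝ → EuclideanSpace ℝ (Fin d) := fun u => deriv X u + gradient F (X u) with hY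
  set H := fderiv ℝ (gradient F) (X t)
  have hΦ' : deriv (fun u => (∫ s in (0:ℝ)..u, ‖Y s‖ ^ 2) - u * E) = fun u => ‖Y u‖ ^ 2 - E :=
    deriv_integral_sub_mul_const
      ((hDX.continuous.add (hG.continuous.comp hX.continuous)).norm.pow 2) E
  have hY' : HasDerivAt Y (H (Y t)) t := by
    refine hasDerivAt_deriv_add_gradient_comp (hX.differentiable two_ne_zero t)
      (hDX.differentiable one_ne_zero t) (hG.differentiable one_ne_zero _) ?_
    rw [hNewton t htIcc, gradient_norm_sq_gradient hF.contDiffAt, smul_smul]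
    norm_num
  have hΦ't : ‖Y t‖ ^ 2 - E = 2 * ⟪gradient F (X t), Y t⟫ := by
    rw [← hE t htIcc, hY, norm_add_sq_real, inner_add_right, real_inner_self_eq_norm_sq,
      real_inner_comm (deriv X t)]
    ring
  have hΦ''t : deriv (fun u => ‖Y u‖ ^ 2 - E) t = 2 * ⟪H (Y t), Y t⟫ := by
    rw [(hY'.norm_sq.sub_const E).deriv, real_inner_comm]
  rw [hΦ', hΦ''t]
  beta_reduce
  rw [hΦ't]
  calc (2 * ⟪gradient F (X t), Y t⟫) ^ 2 / (2 * n)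
      = 2 * ((1 / n) * ⟪gradient F (X t), Y t⟫ ^ 2) := by field_simp
    _ ≤ 2 * ⟪H (Y t), Y t⟫ := by gcongr; exact hconv (X t) (Y t)

theorem stmt_12 (d : ℕ) (T n : ℝ) (hT : 0 < T) (hn : 0 < n)
    (F : EuclideanSpace ℝ (Fin d) → ℝ) (hF : ContDiff ℝ 2 F)
    (hconv : ∀ x v : EuclideanSpace ℝ (Fin d),
      (1 / n) * ⟪gradient F x, v⟫ ^ 2 ≤ ⟪fderiv ℝ (gradient F) x v, v⟫)
    (X : ℝ → EuclideanSpace ℝ (Fin d)) (hX : ContDiff ℝ 2 X)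
    (hNewton : ∀ t ∈ Icc (0:ℝ) T,
      deriv (deriv X) t = (1/2 : ℝ) • gradient (fun z => ‖gradient F z‖ ^ 2) (X t))
    (E : ℝ)
    (hE : ∀ t ∈ Icc (0:ℝ) T, ‖deriv X t‖ ^ 2 - ‖gradient F (X t)‖ ^ 2 = E) :
    ∀ t ∈ Ioo (0:ℝ) T,
      (deriv (fun u => (∫ s in (0:ℝ)..u, ‖deriv X s + gradient F (X s)‖ ^ 2) - u * E) t) ^ 2
          / (2 * n)
        ≤ deriv (deriv
            (fun u => (∫ s in (0:ℝ)..u, ‖deriv X s + gradient F (X s)‖ ^ 2) - u * E)) t :=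
  stmt_12_general d T n hn F hF hconv X hX hNewton E hE
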